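/- arXiv:0806.2753 — 10 statements merged into one kernel-verified Lean document; each statement's English description precedes it below -/
import Mathlib

section
/- Let V be a real inner product space and let t, g be linear isometries of V with t ∘ t = id, g ∘ g ∘ g = id and t ∘ g ∘ t = g⁻¹. Let A be a ℤ-submodule of V such that t(a) = −a for all a ∈ A and a + g(a) + g(g(a)) = 0 for all a ∈ A. Then: (i) A ∩ g(A) = 0; (ii) ⟪x, g(y)⟫ = −(1/2)·⟪x, y⟫ for all x, y ∈ A; (iii) {v ∈ A + g(A) : ⟪v, a⟫ = 0 for all a ∈ A} equals the image (g − g²)(A) of A under the linear map g − g², and ⟪(g − g²)(x), (g − g²)(y)⟫ = 3·⟪x, y⟫ for all x, y ∈ A. -/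
/-!
Conjugating `g` by `t`, which is `-1` on `A`, shows that `g` is symmetric on `A`:
`⟪x, g y⟫ = ⟪x, g⁻¹ y⟫ = ⟪x, g² y⟫`. Pairing `y + g y + g² y = 0` with `x` then gives
`⟪x, g y⟫ = -⟪x, y⟫ / 2`. Everything else is bookkeeping with this formula and the identity
`g a - g² a = a + g (2a)`: a vector `b ∈ A ∩ g(A)` has `‖b‖² = ‖b‖² / 4`, a vector
`a + g b ∈ A + g(A)` is orthogonal to `A` exactly when `b = 2a`, and
`‖a + 2 g a‖² = 3 ‖a‖²`.
-/

open scoped InnerProductSpace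

local notation "⟪" x ", " y "⟫" => @inner ℝ _ _ x y

section

variable {V : Type*} [NormedAddCommGroup V] [InnerProductSpace ℝ V] {g : V ≃ₗᵢ[ℝ] V}

lemma inner_apply_eq_inner_symm_apply (t : V →ₗᵢ[ℝ] V)
    (htgt : ∀ x, t (g (t x)) = g.symm x) {x y : V} (hx : t x = -x) (hy : t y = -y) :
    ⟪x, g y⟫ = ⟪x, g.symm y⟫ := by
  have hgy : t (g y) = -g.symm y := by
    rw [← htgt y, hy, map_neg, map_neg, neg_neg]
  calc ⟪x, g y⟫ = ⟪t x, t (g y)⟫ := (t.inner_map_map x (g y)).symm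
    _ = ⟪x, g.symm y⟫ := by rw [hx, hgy, inner_neg_neg]

lemma symm_apply_eq_apply_apply {a : V} (ha : a + g a + g (g a) = 0) :
    g.symm a = g (g a) := by
  have hg3 : g (g (g a)) = a := by
    have hga := congrArg g ha
    rw [map_add, map_add, map_zero] at hga
    linear_combination (norm := module) hga - ha
  conv_lhs => rw [← hg3, g.symm_apply_apply]

lemma apply_sub_apply_apply_eq {a : V} (ha : a + g a + g (g a) = 0) :
    g a - g (g a) = a + g (a + a) := by
  rw [eq_neg_of_add_eq_zero_right ha, map_add]
  abel

lemma inner_apply_eq_neg_half_inner {x y : V}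
    (hsymm : ⟪x, g y⟫ = ⟪x, g.symm y⟫) (hy : y + g y + g (g y) = 0) :
    ⟪x, g y⟫ = -(1 / 2) * ⟪x, y⟫ := by
  have hsum : ⟪x, y⟫ + ⟪x, g y⟫ + ⟪x, g (g y)⟫ = 0 := by
    rw [← inner_add_right, ← inner_add_right, hy, inner_zero_right]
  rw [symm_apply_eq_apply_apply hy] at hsymm
  linarith

lemma inner_apply_left_eq_neg_half_inner {A : Set V}
    (hA : ∀ x ∈ A, ∀ y ∈ A, ⟪x, g y⟫ = -(1 / 2) * ⟪x, y⟫) {x y : V}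
    (hx : x ∈ A) (hy : y ∈ A) :
    ⟪g x, y⟫ = -(1 / 2) * ⟪x, y⟫ := by
  rw [real_inner_comm, hA y hy x hx, real_inner_comm]

lemma inter_image_eq_singleton_zero {A : Submodule ℤ V}
    (hA : ∀ x ∈ A, ∀ y ∈ A, ⟪x, g y⟫ = -(1 / 2) * ⟪x, y⟫) :
    (A : Set V) ∩ g '' A = {0} := by
  refine Set.eq_singleton_iff_unique_mem.mpr ⟨⟨A.zero_mem, 0, A.zero_mem, map_zero g⟩, ?_⟩
  rintro _ ⟨hgb, b, hb, rfl⟩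
  -- `⟪g b, g b⟫` is `‖b‖²` by isometry and `‖b‖² / 4` by applying the formula twice.
  have hgg := hA (g b) hgb b hb
  have hbg := inner_apply_left_eq_neg_half_inner hA hb hb
  rw [g.inner_map_map, hbg] at hgg
  have hbb : ⟪b, b⟫ = 0 := by linarith
  rw [inner_self_eq_zero.mp hbb, map_zero]

lemma inner_apply_sub_apply_apply {A : Set V}
    (hA : ∀ x ∈ A, ∀ y ∈ A, ⟪x, g y⟫ = -(1 / 2) * ⟪x, y⟫) {x y : V}
    (hx : x ∈ A) (hy : y ∈ A) :
    ⟪g x - g (g x), g y - g (g y)⟫ = 3 * ⟪x, y⟫ := by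
  simp only [inner_sub_left, inner_sub_right, g.inner_map_map]
  rw [hA x hx y hy, inner_apply_left_eq_neg_half_inner hA hx hy]
  ring

lemma mem_sup_span_image_iff {A : Submodule ℤ V} {v : V} :
    v ∈ A ⊔ Submodule.span ℤ (g '' A) ↔ ∃ a ∈ A, ∃ b ∈ A, a + g b = v := by
  have hspan :
      Submodule.span ℤ (g '' A) = A.map (g.toLinearEquiv.toLinearMap.restrictScalars ℤ) := by
    rw [← Submodule.span_eq (A.map _), Submodule.map_coe]
    rfl
  simp only [hspan, Submodule.mem_sup, Submodule.mem_map, exists_exists_and_eq_and]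
  rfl

lemma setOf_mem_sup_orthogonal_eq_image {A : Submodule ℤ V}
    (hA : ∀ x ∈ A, ∀ y ∈ A, ⟪x, g y⟫ = -(1 / 2) * ⟪x, y⟫)
    (hAg : ∀ a ∈ A, a + g a + g (g a) = 0) :
    {v : V | v ∈ A ⊔ Submodule.span ℤ (g '' A) ∧ ∀ a ∈ A, ⟪v, a⟫ = (0 : ℝ)}
      = (fun a => g a - g (g a)) '' A := by
  ext v
  simp only [Set.mem_ofPred_eq, Set.mem_image, SetLike.mem_coe, mem_sup_span_image_iff]
  constructor
  · rintro ⟨⟨a, ha, b, hb, rfl⟩, horth⟩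
    have hab : ∀ c ∈ A, ⟪a, c⟫ = (1 / 2) * ⟪b, c⟫ := fun c hc => by
      have := horth c hc
      rw [inner_add_left, inner_apply_left_eq_neg_half_inner hA hb hc] at this
      linarith
    -- `b - 2a` is orthogonal to both `a` and `b`, hence to itself.
    have hb2 : b = a + a := by
      have hself : ⟪b - (a + a), b - (a + a)⟫ = 0 := by
        simp only [inner_sub_left, inner_sub_right, inner_add_left, inner_add_right]
        linarith [hab a ha, hab b hb, real_inner_comm a b]
      exact sub_eq_zero.mp (inner_self_eq_zero.mp hself)
    exact ⟨a, ha, by rw [apply_sub_apply_apply_eq (hAg a ha), hb2]⟩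
  · rintro ⟨x, hx, rfl⟩
    rw [apply_sub_apply_apply_eq (hAg x hx)]
    refine ⟨⟨x, hx, x + x, A.add_mem hx hx, rfl⟩, fun c hc => ?_⟩
    rw [inner_add_left, inner_apply_left_eq_neg_half_inner hA (A.add_mem hx hx) hc,
      inner_add_left]
    ring

end

theorem dih6_tensor_structure_general
    {V : Type*} [NormedAddCommGroup V] [InnerProductSpace ℝ V]
    (t g : V ≃ₗᵢ[ℝ] V)
    (htgt : ∀ x, t (g (t x)) = g.symm x)
    (A : Submodule ℤ V)
    (hAt : ∀ a ∈ A, t a = -a)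
    (hAg : ∀ a ∈ A, a + g a + g (g a) = 0) :
    -- (i) A ∩ g(A) = 0
    ((A : Set V) ∩ (⇑g '' (A : Set V)) = {0}) ∧
    -- (ii) ⟪x, g y⟫ = -(1/2) ⟪x, y⟫ for x, y ∈ A
    (∀ x ∈ A, ∀ y ∈ A, ⟪x, g y⟫ = -(1/2) * ⟪x, y⟫) ∧
    -- (iii) ann_{A + g(A)}(A) = (g - g²)(A), a √3-scaled copy of A
    ({v : V | v ∈ A ⊔ Submodule.span ℤ (⇑g '' (A : Set V)) ∧ ∀ a ∈ A, ⟪v, a⟫ = (0 : ℝ)}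
        = (fun a => g a - g (g a)) '' (A : Set V)) ∧
    (∀ x ∈ A, ∀ y ∈ A, ⟪g x - g (g x), g y - g (g y)⟫ = 3 * ⟪x, y⟫) := by
  have hA : ∀ x ∈ A, ∀ y ∈ A, ⟪x, g y⟫ = -(1/2) * ⟪x, y⟫ := fun x hx y hy =>
    inner_apply_eq_neg_half_inner
      (inner_apply_eq_inner_symm_apply t.toLinearIsometry htgt (hAt x hx) (hAt y hy)) (hAg y hy)
  exact ⟨inter_image_eq_singleton_zero hA, hA, setOf_mem_sup_orthogonal_eq_image hA hAg,
    fun x hx y hy => inner_apply_sub_apply_apply hA hx hy⟩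

theorem dih6_tensor_structure
    {V : Type*} [NormedAddCommGroup V] [InnerProductSpace ℝ V]
    (t g : V ≃ₗᵢ[ℝ] V)
    (ht2 : ∀ x, t (t x) = x)
    (hg3 : ∀ x, g (g (g x)) = x)
    (htgt : ∀ x, t (g (t x)) = g.symm x)
    (A : Submodule ℤ V)
    (hAt : ∀ a ∈ A, t a = -a)
    (hAg : ∀ a ∈ A, a + g a + g (g a) = 0) :
    -- (i) A ∩ g(A) = 0
    ((A : Set V) ∩ (⇑g '' (A : Set V)) = {0}) ∧
    -- (ii) ⟪x, g y⟫ = -(1/2) ⟪x, y⟫ for x, y ∈ A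
    (∀ x ∈ A, ∀ y ∈ A, ⟪x, g y⟫ = -(1/2) * ⟪x, y⟫) ∧
    -- (iii) ann_{A + g(A)}(A) = (g - g²)(A), a √3-scaled copy of A
    ({v : V | v ∈ A ⊔ Submodule.span ℤ (⇑g '' (A : Set V)) ∧ ∀ a ∈ A, ⟪v, a⟫ = (0 : ℝ)}
        = (fun a => g a - g (g a)) '' (A : Set V)) ∧
    (∀ x ∈ A, ∀ y ∈ A, ⟪g x - g (g x), g y - g (g y)⟫ = 3 * ⟪x, y⟫) :=
  dih6_tensor_structure_general t g htgt A hAt hAg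
end

section
/- Let A = ℤ² equipped with the symmetric ℤ-bilinear form a whose Gram matrix is !![2, −1; −1, 2] (the A2 form). Let B be a finitely generated free ℤ-module with a symmetric ℤ-bilinear form b such that b(z, z) > 0 for every nonzero z ∈ B, and let m be a positive integer with b(z, z) ≥ m for all nonzero z ∈ B and b(z₀, z₀) = m for some z₀ ≠ 0. Equip the tensor product A ⊗ℤ B with the tensor product bilinear form a ⊗ b, determined by (a ⊗ b)(u ⊗ z, u′ ⊗ z′) = a(u, u′)·b(z, z′). Then every nonzero w ∈ A ⊗ B satisfies (a ⊗ b)(w, w) ≥ 2m, and the vectors w ∈ A ⊗ B with (a ⊗ b)(w, w) = 2m are exactly the pure tensors u ⊗ z with a(u, u) = 2 and b(z, z) = m. -/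
/-!
Writing `w = e₀ ⊗ x + e₁ ⊗ y`, the norm of `w` is `b(x,x) + b(y,y) + b(x-y,x-y)`, just as the `A2`
form is `u₀² + u₁² + (u₀ - u₁)²`. If two of the three coordinates `x`, `y`, `x - y` vanish so does the
third, so a nonzero `w` has at least two nonzero coordinates and norm at least `2m`. Equality forces
exactly one coordinate to vanish and the other two to have norm `m`; then `w` is one of the roots
`e₁`, `e₀`, `e₀ + e₁` of `A2` tensored with a minimal vector of `B`.
-/

open scoped TensorProduct

noncomputable section

/-- The `A2` bilinear form on `ℤ²`, with Gram matrix `!![2, -1; -1, 2]`. -/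
def A2Form : LinearMap.BilinForm ℤ (Fin 2 → ℤ) :=
  Matrix.toBilin' !![2, -1; -1, 2]

open TensorProduct

theorem TensorProduct.exists_eq_sum_single_tmul {R M ι : Type*} [CommSemiring R] [AddCommMonoid M]
    [Module R M] [Fintype ι] [DecidableEq ι] (w : (ι → R) ⊗[R] M) :
    ∃ x : ι → M, w = ∑ i, Pi.single i 1 ⊗ₜ x i := by
  induction w using TensorProduct.induction_on with
  | zero => exact ⟨0, by simp⟩
  | tmul u z =>
    refine ⟨fun i => u i • z, ?_⟩
    conv_lhs => rw [← Finset.univ_sum_single u]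
    rw [sum_tmul]
    refine Finset.sum_congr rfl fun i _ => ?_
    rw [← smul_tmul, ← Pi.single_smul, smul_eq_mul, mul_one]
  | add w₁ w₂ h₁ h₂ =>
    obtain ⟨x₁, rfl⟩ := h₁
    obtain ⟨x₂, rfl⟩ := h₂
    exact ⟨x₁ + x₂, by simp [tmul_add, Finset.sum_add_distrib]⟩

theorem A2Form_apply (u v : Fin 2 → ℤ) :
    A2Form u v = 2 * u 0 * v 0 - u 0 * v 1 - u 1 * v 0 + 2 * u 1 * v 1 := by
  simp [A2Form, Matrix.toBilin'_apply', dotProduct, Matrix.mulVec, Fin.sum_univ_two]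
  ring

section

variable {B : Type*} [AddCommGroup B] [Module ℤ B] {b : LinearMap.BilinForm ℤ B}

theorem A2Form_tmul_tmul_self (u : Fin 2 → ℤ) (z : B) :
    A2Form.tmul b (u ⊗ₜ z) (u ⊗ₜ z) = A2Form u u * b z z := by
  rw [LinearMap.BilinForm.tensorDistrib_tmul, smul_eq_mul, mul_comm]

theorem A2Form_tmul_self_eq_add_add_sub (x y : B) :
    A2Form.tmul b (Pi.single 0 1 ⊗ₜ x + Pi.single 1 1 ⊗ₜ y)
      (Pi.single 0 1 ⊗ₜ x + Pi.single 1 1 ⊗ₜ y) = b x x + b y y + b (x - y) (x - y) := by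
  simp [LinearMap.BilinForm.tensorDistrib_tmul, A2Form_apply]
  ring

theorem exists_eq_single_zero_tmul_add_single_one_tmul (w : (Fin 2 → ℤ) ⊗[ℤ] B) :
    ∃ x y : B, w = Pi.single 0 1 ⊗ₜ x + Pi.single 1 1 ⊗ₜ y := by
  obtain ⟨x, rfl⟩ := exists_eq_sum_single_tmul w
  exact ⟨x 0, x 1, Fin.sum_univ_two _⟩

variable {m : ℤ} (hpos : ∀ z : B, z ≠ 0 → 0 < b z z) (hmin : ∀ z : B, z ≠ 0 → m ≤ b z z)
include hpos hmin

theorem two_mul_le_A2Form_tmul_self {w : (Fin 2 → ℤ) ⊗[ℤ] B} (hw : w ≠ 0) :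
    2 * m ≤ A2Form.tmul b w w := by
  obtain ⟨x, y, rfl⟩ := exists_eq_single_zero_tmul_add_single_one_tmul w
  rw [A2Form_tmul_self_eq_add_add_sub]
  rcases eq_or_ne x 0 with rfl | hx
  · have hy : y ≠ 0 := by rintro rfl; simp at hw
    simp only [map_zero, zero_sub, map_neg, LinearMap.neg_apply, neg_neg]
    linarith [hmin y hy]
  rcases eq_or_ne y 0 with rfl | hy
  · simp only [map_zero, sub_zero]
    linarith [hmin x hx]
  have hxy : 0 ≤ b (x - y) (x - y) := by
    rcases eq_or_ne (x - y) 0 with h | h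
    · simp [h]
    · exact (hpos _ h).le
  linarith [hmin x hx, hmin y hy]

theorem exists_eq_tmul_of_A2Form_tmul_self_eq {w : (Fin 2 → ℤ) ⊗[ℤ] B}
    (hw : A2Form.tmul b w w = 2 * m) :
    ∃ (u : Fin 2 → ℤ) (z : B), w = u ⊗ₜ z ∧ A2Form u u = 2 ∧ b z z = m := by
  obtain ⟨x, y, rfl⟩ := exists_eq_single_zero_tmul_add_single_one_tmul w
  rw [A2Form_tmul_self_eq_add_add_sub] at hw
  rcases eq_or_ne x 0 with rfl | hx
  · refine ⟨Pi.single 1 1, y, by simp, by simp [A2Form_apply], ?_⟩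
    simp only [map_zero, zero_sub, map_neg, LinearMap.neg_apply, neg_neg] at hw
    linarith
  rcases eq_or_ne y 0 with rfl | hy
  · refine ⟨Pi.single 0 1, x, by simp, by simp [A2Form_apply], ?_⟩
    simp only [map_zero, sub_zero] at hw
    linarith
  obtain rfl : x = y := by
    by_contra hxy
    linarith [hmin x hx, hmin y hy, hpos _ (sub_ne_zero.2 hxy)]
  refine ⟨Pi.single 0 1 + Pi.single 1 1, x, (add_tmul _ _ _).symm, by simp [A2Form_apply], ?_⟩
  simp only [sub_self, map_zero, add_zero] at hw
  linarith

end

theorem minimal_vectors_of_A2_tensor_general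
    {B : Type*} [AddCommGroup B] [Module ℤ B]
    (b : LinearMap.BilinForm ℤ B)
    (hpos : ∀ z : B, z ≠ 0 → 0 < b z z)
    (m : ℤ)
    (hmin : ∀ z : B, z ≠ 0 → m ≤ b z z) :
    (∀ w : (Fin 2 → ℤ) ⊗[ℤ] B, w ≠ 0 → 2 * m ≤ (A2Form.tmul b) w w) ∧
    (∀ w : (Fin 2 → ℤ) ⊗[ℤ] B,
      (A2Form.tmul b) w w = 2 * m ↔
        ∃ (u : Fin 2 → ℤ) (z : B), w = u ⊗ₜ[ℤ] z ∧ A2Form u u = 2 ∧ b z z = m) := by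
  refine ⟨fun _ => two_mul_le_A2Form_tmul_self hpos hmin,
    fun _ => ⟨exists_eq_tmul_of_A2Form_tmul_self_eq hpos hmin, ?_⟩⟩
  rintro ⟨u, z, rfl, hu, hz⟩
  rw [A2Form_tmul_tmul_self, hu, hz]

theorem minimal_vectors_of_A2_tensor
    {B : Type*} [AddCommGroup B] [Module ℤ B] [Module.Free ℤ B] [Module.Finite ℤ B]
    (b : LinearMap.BilinForm ℤ B) (hsymm : ∀ z w : B, b z w = b w z)
    (hpos : ∀ z : B, z ≠ 0 → 0 < b z z)
    (m : ℤ) (hm : 0 < m)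
    (hmin : ∀ z : B, z ≠ 0 → m ≤ b z z)
    (hmem : ∃ z₀ : B, z₀ ≠ 0 ∧ b z₀ z₀ = m) :
    (∀ w : (Fin 2 → ℤ) ⊗[ℤ] B, w ≠ 0 → 2 * m ≤ (A2Form.tmul b) w w) ∧
    (∀ w : (Fin 2 → ℤ) ⊗[ℤ] B,
      (A2Form.tmul b) w w = 2 * m ↔
        ∃ (u : Fin 2 → ℤ) (z : B), w = u ⊗ₜ[ℤ] z ∧ A2Form u u = 2 ∧ b z z = m) :=
  minimal_vectors_of_A2_tensor_general b hpos m hmin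

end
end

section
/- Let L be a free ℤ-module and L₁ ⊆ L a submodule such that the quotient L ⧸ L₁ is finite, say of cardinality n. Let K be an abelian group on which multiplication by n is bijective. Then every ℤ-bilinear map f : L₁ × L₁ → K extends uniquely to a ℤ-bilinear map on L: there exists a unique ℤ-bilinear F : L × L → K whose restriction to L₁ × L₁ equals f. -/
/-!
Multiplication by `n = |L ⧸ L₁|` maps `L` into `L₁`, so a bilinear `F` on `L` is determined by
`F (n • x) (n • y) = n • n • F x y`, and since `n •` is invertible on `K` the only candidate is
`F x y = n⁻¹ • n⁻¹ • f (n • x) (n • y)`, which is bilinear and restricts to `f`.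
-/

theorem Submodule.card_quotient_nsmul_mem {R M : Type*} [Ring R] [AddCommGroup M] [Module R M]
    (p : Submodule R M) (x : M) : Nat.card (M ⧸ p) • x ∈ p := by
  rw [← Submodule.Quotient.mk_eq_zero, Submodule.Quotient.mk_smul]
  exact card_nsmul_eq_zero'

namespace LinearMap

variable {R M K : Type*} [CommSemiring R] [AddCommMonoid M] [Module R M]
  [AddCommMonoid K] [Module R K] {N : Submodule R M} {n : ℕ}

theorem nsmul_apply_nsmul (F : M →ₗ[R] M →ₗ[R] K) (x y : M) :
    F (n • x) (n • y) = n • n • F x y := by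
  rw [map_nsmul, map_nsmul, smul_apply]

theorem ext_of_restrict_eq_of_nsmul_mem (hN : ∀ x, n • x ∈ N)
    (hK : Function.Injective fun k : K => n • k) {F G : M →ₗ[R] M →ₗ[R] K}
    (hFG : ∀ x y : N, F x y = G x y) : F = G := by
  ext x y
  apply hK
  apply hK
  simpa only [nsmul_apply_nsmul] using hFG ⟨n • x, hN x⟩ ⟨n • y, hN y⟩

theorem exists_extension_of_nsmul_mem (hN : ∀ x, n • x ∈ N)
    (hK : Function.Bijective fun k : K => n • k) (f : N →ₗ[R] N →ₗ[R] K) :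
    ∃ F : M →ₗ[R] M →ₗ[R] K, ∀ x y : N, F x y = f x y := by
  let ι : M →ₗ[R] N := (n • LinearMap.id).codRestrict N hN
  have hι : ∀ x : N, ι x = n • x := fun x => Subtype.ext rfl
  let e : K ≃ₗ[R] K := LinearEquiv.ofBijective (n • LinearMap.id) hK
  let ψ : K →ₗ[R] K := e.symm
  have hψ : ∀ k : K, ψ (n • k) = k := e.symm_apply_apply
  refine ⟨((f.compl₁₂ ι ι).compr₂ ψ).compr₂ ψ, fun x y => ?_⟩
  simp only [compr₂_apply, compl₁₂_apply, hι, nsmul_apply_nsmul, hψ]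

end LinearMap

theorem bilinear_extension_unique_general
    {L : Type*} [AddCommGroup L]
    (L₁ : Submodule ℤ L) (n : ℕ) (hn : Nat.card (L ⧸ L₁) = n)
    {K : Type*} [AddCommGroup K]
    (hK : Function.Bijective fun k : K => n • k)
    (f : L₁ →ₗ[ℤ] L₁ →ₗ[ℤ] K) :
    ∃! F : L →ₗ[ℤ] L →ₗ[ℤ] K, ∀ x y : L₁, F (x : L) (y : L) = f x y := by
  have hN : ∀ x : L, n • x ∈ L₁ := hn ▸ L₁.card_quotient_nsmul_mem
  obtain ⟨F, hF⟩ := LinearMap.exists_extension_of_nsmul_mem hN hK f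
  exact ⟨F, hF, fun G hG => LinearMap.ext_of_restrict_eq_of_nsmul_mem hN hK.injective
    fun x y => (hG x y).trans (hF x y).symm⟩

theorem bilinear_extension_unique
    {L : Type*} [AddCommGroup L] [Module.Free ℤ L]
    (L₁ : Submodule ℤ L) [Finite (L ⧸ L₁)] (n : ℕ) (hn : Nat.card (L ⧸ L₁) = n)
    {K : Type*} [AddCommGroup K]
    (hK : Function.Bijective fun k : K => n • k)
    (f : L₁ →ₗ[ℤ] L₁ →ₗ[ℤ] K) :
    ∃! F : L →ₗ[ℤ] L →ₗ[ℤ] K, ∀ x y : L₁, F (x : L) (y : L) = f x y :=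
  bilinear_extension_unique_general L₁ n hn hK f
end

section
/- Let V be a finite-dimensional real inner product space and let X ⊆ V be an integral lattice of rank m ≥ 1, i.e., a ℤ-submodule with ⟪x, y⟫ ∈ ℤ for all x, y ∈ X and whose ℝ-span has dimension m. Let r ≥ 1 be an integer and let W be a ℤ-submodule of V with X ⊆ W, with ⟪w, x⟫ ∈ ℤ for all w ∈ W and x ∈ X, and with W ⧸ X isomorphic as an abelian group to (ℤ/2ℤ)^r. If every w ∈ W \ X satisfies ⟪w, w⟫ ∉ ℤ, then r = 1. -/
open scoped InnerProductSpace

local notation "⟪" x ", " y "⟫" => @inner ℝ _ _ x y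

noncomputable section

/-! If `w₁, w₂ ∈ W` represent two distinct nonzero classes of `W / X ≅ (ℤ/2)ʳ`, then `2w₁, 2w₂ ∈ X`,
so `2⟪w₁, w₁⟫`, `2⟪w₂, w₂⟫` and `2⟪w₁, w₂⟫` are integers. As `⟪wᵢ, wᵢ⟫` is not an integer, both norms
are half-odd, hence `⟪w₁ + w₂, w₁ + w₂⟫ = ⟪w₁, w₁⟫ + ⟪w₂, w₂⟫ + 2⟪w₁, w₂⟫` is an integer, although
`w₁ + w₂ ∉ X`. So `W / X` has no two distinct nonzero elements, i.e. `r = 1`. -/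

lemma exists_int_add_eq_of_two_mul_int_of_not_int {a b : ℝ}
    (ha : ∃ n : ℤ, 2 * a = n) (hb : ∃ n : ℤ, 2 * b = n)
    (ha' : ¬∃ n : ℤ, a = n) (hb' : ¬∃ n : ℤ, b = n) :
    ∃ n : ℤ, a + b = n := by
  obtain ⟨n, hn⟩ := ha
  obtain ⟨m, hm⟩ := hb
  have hn_odd : ¬ 2 ∣ n := by
    rintro ⟨k, rfl⟩
    exact ha' ⟨k, by push_cast at hn; linarith⟩
  have hm_odd : ¬ 2 ∣ m := by
    rintro ⟨k, rfl⟩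
    exact hb' ⟨k, by push_cast at hm; linarith⟩
  obtain ⟨k, hk⟩ : 2 ∣ n + m := by omega
  refine ⟨k, ?_⟩
  have : ((n + m : ℤ) : ℝ) = ((2 * k : ℤ) : ℝ) := by rw [hk]
  push_cast at this
  linarith

lemma exists_int_inner_add_self_of_not_int {V : Type*} [NormedAddCommGroup V]
    [InnerProductSpace ℝ V] {w₁ w₂ : V}
    (h₁₁ : ∃ n : ℤ, ⟪w₁, w₁ + w₁⟫ = n) (h₂₂ : ∃ n : ℤ, ⟪w₂, w₂ + w₂⟫ = n)
    (h₁₂ : ∃ n : ℤ, ⟪w₁, w₂ + w₂⟫ = n)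
    (h₁ : ¬∃ n : ℤ, ⟪w₁, w₁⟫ = n) (h₂ : ¬∃ n : ℤ, ⟪w₂, w₂⟫ = n) :
    ∃ n : ℤ, ⟪w₁ + w₂, w₁ + w₂⟫ = n := by
  simp only [inner_add_right, ← two_mul] at h₁₁ h₂₂ h₁₂
  obtain ⟨k, hk⟩ := exists_int_add_eq_of_two_mul_int_of_not_int h₁₁ h₂₂ h₁ h₂
  obtain ⟨l, hl⟩ := h₁₂
  refine ⟨k + l, ?_⟩
  rw [inner_add_add_self, real_inner_comm w₁ w₂]
  push_cast
  linarith

section ElementaryAbelian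

variable {A : Type*} [AddCommGroup A] {r : ℕ}

lemma add_self_eq_zero_of_addEquiv_pi_zmod_two (e : A ≃+ (Fin r → ZMod 2)) (a : A) :
    a + a = 0 :=
  e.injective <| funext fun i => by
    rw [map_add, map_zero, Pi.add_apply, CharTwo.add_self_eq_zero, Pi.zero_apply]

lemma exists_ne_zero_add_ne_zero_of_addEquiv_pi_zmod_two (hr : 2 ≤ r)
    (e : A ≃+ (Fin r → ZMod 2)) : ∃ a b : A, a ≠ 0 ∧ b ≠ 0 ∧ a + b ≠ 0 := by
  let i₀ : Fin r := ⟨0, by omega⟩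
  let i₁ : Fin r := ⟨1, by omega⟩
  have hi : i₀ ≠ i₁ := by simp [i₀, i₁, Fin.ext_iff]
  refine ⟨e.symm (Pi.single i₀ 1), e.symm (Pi.single i₁ 1), ?_, ?_, ?_⟩
  · simp
  · simp
  · rw [← map_add, map_ne_zero_iff _ e.symm.injective]
    intro h
    simpa [hi] using congrFun h i₀

end ElementaryAbelian

theorem index_two_overlattice_with_nonintegral_cosets_general
    {V : Type*} [NormedAddCommGroup V] [InnerProductSpace ℝ V]
    (X W : Submodule ℤ V)
    (r : ℕ) (hr : 1 ≤ r)
    (hWX : ∀ w ∈ W, ∀ x ∈ X, ∃ n : ℤ, ⟪w, x⟫ = (n : ℝ))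
    (hquot : Nonempty ((W ⧸ X.comap W.subtype) ≃+ (Fin r → ZMod 2)))
    (hnonint : ∀ w ∈ W, w ∉ X → ¬∃ n : ℤ, ⟪w, w⟫ = (n : ℝ)) :
    r = 1 := by
  by_contra hne
  obtain ⟨e⟩ := hquot
  have mk_eq_zero (w : W) :
      (Submodule.Quotient.mk w : W ⧸ X.comap W.subtype) = 0 ↔ (w : V) ∈ X :=
    Submodule.Quotient.mk_eq_zero _
  have two_mem (w : W) : (w : V) + w ∈ X :=
    (mk_eq_zero (w + w)).1 <| by
      rw [Submodule.Quotient.mk_add]; exact add_self_eq_zero_of_addEquiv_pi_zmod_two e _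
  obtain ⟨a, b, ha, hb, hab⟩ := exists_ne_zero_add_ne_zero_of_addEquiv_pi_zmod_two (by omega) e
  obtain ⟨w₁, rfl⟩ := Submodule.Quotient.mk_surjective _ a
  obtain ⟨w₂, rfl⟩ := Submodule.Quotient.mk_surjective _ b
  exact hnonint _ (W.add_mem w₁.2 w₂.2) (fun h => hab ((mk_eq_zero (w₁ + w₂)).2 h))
    (exists_int_inner_add_self_of_not_int (hWX _ w₁.2 _ (two_mem w₁))
      (hWX _ w₂.2 _ (two_mem w₂)) (hWX _ w₁.2 _ (two_mem w₂))
      (hnonint _ w₁.2 (mt (mk_eq_zero w₁).2 ha)) (hnonint _ w₂.2 (mt (mk_eq_zero w₂).2 hb)))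

theorem index_two_overlattice_with_nonintegral_cosets
    {V : Type*} [NormedAddCommGroup V] [InnerProductSpace ℝ V] [FiniteDimensional ℝ V]
    (X W : Submodule ℤ V) (m : ℕ) (hm : 1 ≤ m)
    (hrank : Module.finrank ℝ (Submodule.span ℝ (X : Set V)) = m)
    (hXint : ∀ x ∈ X, ∀ y ∈ X, ∃ n : ℤ, ⟪x, y⟫ = (n : ℝ))
    (r : ℕ) (hr : 1 ≤ r)
    (hXW : X ≤ W)
    (hWX : ∀ w ∈ W, ∀ x ∈ X, ∃ n : ℤ, ⟪w, x⟫ = (n : ℝ))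
    (hquot : Nonempty ((W ⧸ X.comap W.subtype) ≃+ (Fin r → ZMod 2)))
    (hnonint : ∀ w ∈ W, w ∉ X → ¬∃ n : ℤ, ⟪w, w⟫ = (n : ℝ)) :
    r = 1 :=
  index_two_overlattice_with_nonintegral_cosets_general X W r hr hWX hquot hnonint

end
end

section
/- Let X be an abelian group, t : X → X an additive map with t ∘ t = id, and Y ⊆ X a subgroup with t(Y) ⊆ Y such that the quotient X ⧸ Y is finite of odd order. Let c ∈ {1, −1} and suppose t(x) − c·x ∈ Y for every x ∈ X (i.e., t acts on X ⧸ Y as the scalar c). Then for every x ∈ X there exists u ∈ x + Y with t(u) = c·u. -/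
/-!
Since `t` is an involution and `c * c = 1`, every `x + c • t x` is a `c`-eigenvector of `t`, and
it is congruent to `2 • x` modulo `Y`. As the index of `Y` is odd, `2` has an integer inverse `a`
modulo it, and `a • (x + c • t x)` is then a `c`-eigenvector congruent to `x`.
-/

theorem AddSubgroup.exists_mul_zsmul_sub_mem_of_coprime_index {G : Type*} [AddGroup G]
    (H : AddSubgroup G) [H.Normal] {m : ℕ} (hm : m.Coprime H.index) :
    ∃ a : ℤ, ∀ g : G, (a * m) • g - g ∈ H := by
  refine ⟨Nat.gcdA m H.index, fun g => ?_⟩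
  have bezout : Nat.gcdA m H.index * m - 1 = -(Nat.gcdB m H.index * H.index) := by
    have := Nat.gcd_eq_gcd_ab m H.index
    rw [hm] at this
    push_cast at this
    linarith
  have h_sub : (Nat.gcdA m H.index * m) • g - g = (Nat.gcdA m H.index * m - 1) • g := by
    rw [sub_zsmul, one_zsmul, sub_eq_add_neg]
  rw [h_sub, bezout, neg_zsmul, mul_zsmul, natCast_zsmul]
  exact H.neg_mem (H.zsmul_mem (H.nsmul_index_mem g) _)

theorem AddMonoidHom.map_add_zsmul_map_eq_zsmul {X : Type*} [AddCommGroup X] {t : X →+ X}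
    (ht : ∀ x, t (t x) = x) {c : ℤ} (hc : c * c = 1) (x : X) :
    t (x + c • t x) = c • (x + c • t x) := by
  rw [map_add, map_zsmul, ht, smul_add, smul_smul, hc, one_smul, add_comm]

theorem lift_eigenvector_mod_odd_index_general
    {X : Type*} [AddCommGroup X] (t : X →+ X) (ht2 : ∀ x, t (t x) = x)
    (Y : AddSubgroup X) (hodd : Odd (Nat.card (X ⧸ Y)))
    (c : ℤ) (hc : c = 1 ∨ c = -1)
    (hscalar : ∀ x : X, t x - c • x ∈ Y) :
    ∀ x : X, ∃ u : X, u - x ∈ Y ∧ t u = c • u := by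
  intro x
  have hc2 : c * c = 1 := by rcases hc with rfl | rfl <;> rfl
  obtain ⟨a, ha⟩ := Y.exists_mul_zsmul_sub_mem_of_coprime_index (m := 2)
    (Nat.coprime_two_left.mpr hodd)
  refine ⟨a • (x + c • t x), ?_, ?_⟩
  · have decomp : a • (x + c • t x) - x = (a * c) • (t x - c • x) + ((a * 2) • x - x) := by
      rw [smul_sub, smul_smul, mul_assoc, hc2, mul_one]
      module
    rw [decomp]
    exact Y.add_mem (Y.zsmul_mem (hscalar x) _) (ha x)
  · rw [map_zsmul, t.map_add_zsmul_map_eq_zsmul ht2 hc2, smul_comm]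

theorem lift_eigenvector_mod_odd_index
    {X : Type*} [AddCommGroup X] (t : X →+ X) (ht2 : ∀ x, t (t x) = x)
    (Y : AddSubgroup X) (htY : ∀ y ∈ Y, t y ∈ Y)
    [Finite (X ⧸ Y)] (hodd : Odd (Nat.card (X ⧸ Y)))
    (c : ℤ) (hc : c = 1 ∨ c = -1)
    (hscalar : ∀ x : X, t x - c • x ∈ Y) :
    ∀ x : X, ∃ u : X, u - x ∈ Y ∧ t u = c • u :=
  lift_eigenvector_mod_odd_index_general t ht2 Y hodd c hc hscalar
end

section
/- Let F be a finite field of odd characteristic, V a finite-dimensional F-vector space, Q : V → F a quadratic form, and c a generator of the multiplicative group of F. (i) If the dimension of V is odd, then there exists a linear automorphism g of V with Q(g(v)) = c²·Q(v) for all v ∈ V. (ii) If the dimension of V is even and the bilinear form associated to Q is nondegenerate, then there exists a linear automorphism g of V with Q(g(v)) = c·Q(v) for all v ∈ V. -/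
/-!
In part (i) scaling by `c` multiplies `Q` by `c²`. For part (ii), `Q` diagonalises with unit
weights into `dim V / 2` binary blocks `⟨a, b⟩`. Over a finite field of odd characteristic a binary
form is universal, so `a p² + b q² = c a` for some `p, q`; the matrix `!![p, -b q / a; q, p]`,
multiplication by `p + q √(-b/a)`, has determinant `c` and multiplies `⟨a, b⟩` by `c`. Acting by
it on every block gives the required automorphism.
-/

namespace QuadraticMap

section Similitude

variable {R M M' P : Type*} [CommSemiring R] [AddCommMonoid M] [Module R M] [AddCommMonoid M']
  [Module R M'] [AddCommMonoid P] [Module R P]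

def HasSimilitude (Q : QuadraticMap R M P) (c : R) : Prop :=
  ∃ g : M ≃ₗ[R] M, ∀ v, Q (g v) = c • Q v

theorem hasSimilitude_sq (Q : QuadraticMap R M P) (c : Rˣ) : Q.HasSimilitude ((c : R) ^ 2) :=
  ⟨LinearEquiv.smulOfUnit c, fun v => by
    show Q (c • v) = _
    rw [Units.smul_def, QuadraticMap.map_smul, pow_two]⟩

theorem HasSimilitude.of_isometryEquiv {Q : QuadraticMap R M P} {Q' : QuadraticMap R M' P}
    {c : R} (h : Q'.HasSimilitude c) (e : Q.IsometryEquiv Q') : Q.HasSimilitude c := by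
  obtain ⟨g, hg⟩ := h
  refine ⟨(e.toLinearEquiv.trans g).trans e.symm.toLinearEquiv, fun v => ?_⟩
  calc Q (e.symm (g (e v))) = Q' (g (e v)) := e.symm.map_app _
    _ = c • Q v := by rw [hg, e.map_app]

theorem hasSimilitude_pi {ι : Type*} [Fintype ι] {Mᵢ : ι → Type*} [∀ i, AddCommMonoid (Mᵢ i)]
    [∀ i, Module R (Mᵢ i)] {Q : ∀ i, QuadraticMap R (Mᵢ i) P} {c : R}
    (h : ∀ i, (Q i).HasSimilitude c) : (pi Q).HasSimilitude c := by
  choose g hg using h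
  refine ⟨LinearEquiv.piCongrRight g, fun v => ?_⟩
  simp only [pi_apply, LinearEquiv.piCongrRight_apply, hg, Finset.smul_sum]

end Similitude

section WeightedSumSquares

variable {R S ι κ : Type*} [CommSemiring R] [Monoid S] [DistribMulAction S R]
  [SMulCommClass S R R] [Fintype ι] [Fintype κ]

def isometryEquivWeightedSumSquaresComp (w : ι → S) (e : κ ≃ ι) :
    (weightedSumSquares R w).IsometryEquiv (weightedSumSquares R (w ∘ e)) where
  toLinearEquiv := LinearEquiv.funCongrLeft R R e
  map_app' x := by
    simp only [weightedSumSquares_apply]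
    exact Equiv.sum_comp e fun i => w i • (x i * x i)

def isometryEquivPiWeightedSumSquares (w : κ × ι → S) :
    (weightedSumSquares R w).IsometryEquiv (pi fun k => weightedSumSquares R fun i => w (k, i)) where
  toLinearEquiv := LinearEquiv.curry R R κ ι
  map_app' x := by
    simp only [pi_apply, weightedSumSquares_apply, Fintype.sum_prod_type]
    rfl

end WeightedSumSquares

section Field

variable {F : Type*} [Field F]

theorem hasSimilitude_weightedSumSquares_fin_two (w : Fin 2 → Fˣ) {c : F} (hc : c ≠ 0)
    {x : Fin 2 → F} (hx : weightedSumSquares F w x = c * w 0) :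
    (weightedSumSquares F w).HasSimilitude c := by
  set a : F := (w 0 : F) with ha_def
  set b : F := (w 1 : F) with hb_def
  have ha : a ≠ 0 := (w 0).ne_zero
  have hx' : a * x 0 ^ 2 + b * x 1 ^ 2 = c * a := by
    simpa [weightedSumSquares_apply, Fin.sum_univ_two, Units.smul_def, pow_two] using hx
  let M : Matrix (Fin 2) (Fin 2) F := !![x 0, -(b * x 1) / a; x 1, x 0]
  have hdet : M.det = c := by
    rw [Matrix.det_fin_two_of]
    field_simp
    linear_combination hx'
  let _ : Invertible M := M.invertibleOfIsUnitDet (hdet ▸ hc.isUnit)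
  refine ⟨M.toLinearEquiv' ‹_›, fun v => ?_⟩
  change weightedSumSquares F w (M.mulVec v) = _
  simp only [Matrix.mulVec_fin_two, M, Matrix.of_apply, Matrix.cons_val', Matrix.cons_val_zero,
    Matrix.cons_val_one, Matrix.cons_val_fin_one, weightedSumSquares_apply, Fin.sum_univ_two,
    Units.smul_def, smul_eq_mul, ← ha_def, ← hb_def]
  field_simp
  linear_combination (a * v 0 ^ 2 + b * v 1 ^ 2) * hx'

end Field

section FiniteField

variable {F : Type*} [Field F] [Fintype F]

open Polynomial in
theorem surjective_weightedSumSquares_fin_two (hF : ringChar F ≠ 2) (w : Fin 2 → Fˣ) :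
    Function.Surjective (weightedSumSquares F w) := by
  intro d
  obtain ⟨p, q, hpq⟩ := FiniteField.exists_root_sum_quadratic
    (f := C (w 0 : F) * X ^ 2 + C 0 * X + C (-d)) (g := C (w 1 : F) * X ^ 2 + C 0 * X + C 0)
    (degree_quadratic (w 0).ne_zero) (degree_quadratic (w 1).ne_zero)
    (FiniteField.odd_card_of_char_ne_two hF)
  refine ⟨![p, q], ?_⟩
  simp only [eval_add, eval_mul, eval_pow, eval_C, eval_X] at hpq
  simp only [weightedSumSquares_apply, Fin.sum_univ_two, Units.smul_def, smul_eq_mul,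
    Matrix.cons_val_zero, Matrix.cons_val_one]
  linear_combination hpq

theorem hasSimilitude_weightedSumSquares_prod_fin_two {κ : Type*} [Fintype κ]
    (hF : ringChar F ≠ 2) (w : κ × Fin 2 → Fˣ) {c : F} (hc : c ≠ 0) :
    (weightedSumSquares F w).HasSimilitude c := by
  refine (hasSimilitude_pi fun k => ?_).of_isometryEquiv (isometryEquivPiWeightedSumSquares w)
  obtain ⟨x, hx⟩ := surjective_weightedSumSquares_fin_two hF (fun i => w (k, i)) (c * w (k, 0))
  exact hasSimilitude_weightedSumSquares_fin_two _ hc hx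

end FiniteField

end QuadraticMap

open QuadraticMap in
theorem scalar_multiple_of_quadratic_form_general
    {F : Type*} [Field F] [Fintype F] (hchar : ringChar F ≠ 2)
    {V : Type*} [AddCommGroup V] [Module F V] [FiniteDimensional F V]
    (Q : QuadraticForm F V) (c : Fˣ) :
    (Odd (Module.finrank F V) →
      ∃ g : V ≃ₗ[F] V, ∀ v : V, Q (g v) = ((c : F)) ^ 2 * Q v) ∧
    (Even (Module.finrank F V) → (QuadraticMap.polarBilin Q).Nondegenerate →
      ∃ g : V ≃ₗ[F] V, ∀ v : V, Q (g v) = (c : F) * Q v) := by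
  refine ⟨fun _ => by simpa only [HasSimilitude, smul_eq_mul] using Q.hasSimilitude_sq c, ?_⟩
  rintro ⟨m, hm⟩ hQ
  have : Invertible (2 : F) := invertibleOfNonzero (Ring.two_ne_zero hchar)
  obtain ⟨w, ⟨φ⟩⟩ := Q.equivalent_weightedSumSquares_units_of_nondegenerate'
    (nondegenerate_associated_iff.2 (nondegenerate_polar_iff.1 hQ)).1
  let e : Fin m × Fin 2 ≃ Fin (Module.finrank F V) := finProdFinEquiv.trans (finCongr (by omega))
  have hw := hasSimilitude_weightedSumSquares_prod_fin_two hchar (w ∘ e) c.ne_zero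
  simpa only [HasSimilitude, smul_eq_mul] using
    (hw.of_isometryEquiv (isometryEquivWeightedSumSquaresComp w e)).of_isometryEquiv φ

theorem scalar_multiple_of_quadratic_form
    {F : Type*} [Field F] [Fintype F] (hchar : ringChar F ≠ 2)
    {V : Type*} [AddCommGroup V] [Module F V] [FiniteDimensional F V]
    (Q : QuadraticForm F V) (c : Fˣ) (hc : ∀ u : Fˣ, u ∈ Subgroup.zpowers c) :
    (Odd (Module.finrank F V) →
      ∃ g : V ≃ₗ[F] V, ∀ v : V, Q (g v) = ((c : F)) ^ 2 * Q v) ∧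
    (Even (Module.finrank F V) → (QuadraticMap.polarBilin Q).Nondegenerate →
      ∃ g : V ≃ₗ[F] V, ∀ v : V, Q (g v) = (c : F) * Q v) :=
  scalar_multiple_of_quadratic_form_general hchar Q c
end

section
/- Let V be a finite-dimensional real inner product space and let L ⊆ V be a ℤ-submodule whose ℝ-span is V, such that L is integral (⟪x, y⟫ ∈ ℤ for all x, y ∈ L), even (⟪x, x⟫ ∈ 2ℤ for all x ∈ L), and rootless (no x ∈ L with ⟪x, x⟫ = 2). Let L* := {v ∈ V : ⟪v, x⟫ ∈ ℤ for all x ∈ L} be the dual lattice. Suppose g is a linear isometry of V with g ∘ g ∘ g = id and g(L) = L, such that the only v ∈ V with g(v) = v is v = 0, and such that g(v) − v ∈ L for every v ∈ L*. Then every nonzero v ∈ L* satisfies ⟪v, v⟫ ≥ 4/3. -/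
/-!
Put `x := g v - v`, which lies in `L` for `v ∈ L*`. Since `v + g v + g² v` is fixed by `g`, it
vanishes, so `v`, `g v`, `g² v` have equal norms and sum to zero: they form an equilateral
triangle, whence `⟪x, x⟫ = 3 ⟪v, v⟫`. As `L` is even and rootless, a nonzero `x ∈ L` has
`⟪x, x⟫ ≥ 4`.
-/

open scoped InnerProductSpace

local notation "⟪" x ", " y "⟫" => @inner ℝ _ _ x y

noncomputable section

theorem add_add_eq_zero_of_iterate_three_eq_self {M F : Type*} [AddCommMonoid M]
    [FunLike F M M] [AddMonoidHomClass F M M] (f : F) (hf3 : ∀ v, f (f (f v)) = v)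
    (hfix : ∀ v, f v = v → v = 0) (v : M) : v + f v + f (f v) = 0 :=
  hfix _ <| by rw [map_add, map_add, hf3, add_comm, ← add_assoc]

theorem norm_sub_sq_eq_three_mul_of_norm_eq {V : Type*} [NormedAddCommGroup V]
    [InnerProductSpace ℝ V] {u w : V} (hw : ‖w‖ = ‖u‖) (huw : ‖u + w‖ = ‖u‖) :
    ‖w - u‖ ^ 2 = 3 * ‖u‖ ^ 2 := by
  have hpar := parallelogram_law_with_norm ℝ w u
  rw [add_comm w u, huw, hw] at hpar
  linarith

theorem four_le_inner_self_of_even_of_rootless {V : Type*} [NormedAddCommGroup V]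
    [InnerProductSpace ℝ V] (L : Submodule ℤ V)
    (heven : ∀ x ∈ L, ∃ n : ℤ, ⟪x, x⟫ = 2 * (n : ℝ)) (hroot : ∀ x ∈ L, ⟪x, x⟫ ≠ (2 : ℝ))
    {x : V} (hx : x ∈ L) (hx0 : x ≠ 0) : 4 ≤ ⟪x, x⟫ := by
  obtain ⟨n, hn⟩ := heven x hx
  have hpos : (0 : ℝ) < n := by
    have := real_inner_self_pos.mpr hx0
    linarith
  have hn1 : (n : ℝ) ≠ 1 := fun h => hroot x hx (by rw [hn, h]; norm_num)
  have hn2 : (2 : ℝ) ≤ n := by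
    have : (1 : ℤ) < n := lt_of_le_of_ne (by exact_mod_cast hpos) (by exact_mod_cast hn1.symm)
    exact_mod_cast this
  linarith

theorem dual_min_norm_of_fixed_point_free_triality_general
    {V : Type*} [NormedAddCommGroup V] [InnerProductSpace ℝ V]
    (L : Submodule ℤ V)
    (heven : ∀ x ∈ L, ∃ n : ℤ, ⟪x, x⟫ = 2 * (n : ℝ))
    (hroot : ∀ x ∈ L, ⟪x, x⟫ ≠ (2 : ℝ))
    (g : V ≃ₗᵢ[ℝ] V)
    (hg3 : ∀ v, g (g (g v)) = v)
    (hfix : ∀ v : V, g v = v → v = 0)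
    (hdual : ∀ v : V, (∀ x ∈ L, ∃ n : ℤ, ⟪v, x⟫ = (n : ℝ)) → g v - v ∈ L) :
    ∀ v : V, (∀ x ∈ L, ∃ n : ℤ, ⟪v, x⟫ = (n : ℝ)) → v ≠ 0 → (4 / 3 : ℝ) ≤ ⟪v, v⟫ := by
  intro v hv hv0
  have hsum := add_add_eq_zero_of_iterate_three_eq_self g hg3 hfix v
  have hvg : ‖v + g v‖ = ‖v‖ := by
    rw [eq_neg_of_add_eq_zero_left hsum, norm_neg, g.norm_map, g.norm_map]
  have hthree : ⟪g v - v, g v - v⟫ = 3 * ⟪v, v⟫ := by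
    simp only [real_inner_self_eq_norm_sq]
    exact norm_sub_sq_eq_three_mul_of_norm_eq (g.norm_map v) hvg
  have hne : g v - v ≠ 0 := fun h => hv0 (hfix v (sub_eq_zero.mp h))
  have hfour := four_le_inner_self_of_even_of_rootless L heven hroot (hdual v hv) hne
  linarith

theorem dual_min_norm_of_fixed_point_free_triality
    {V : Type*} [NormedAddCommGroup V] [InnerProductSpace ℝ V] [FiniteDimensional ℝ V]
    (L : Submodule ℤ V) (hfull : Submodule.span ℝ (L : Set V) = ⊤)
    (hint : ∀ x ∈ L, ∀ y ∈ L, ∃ n : ℤ, ⟪x, y⟫ = (n : ℝ))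
    (heven : ∀ x ∈ L, ∃ n : ℤ, ⟪x, x⟫ = 2 * (n : ℝ))
    (hroot : ∀ x ∈ L, ⟪x, x⟫ ≠ (2 : ℝ))
    (g : V ≃ₗᵢ[ℝ] V)
    (hg3 : ∀ v, g (g (g v)) = v)
    (hgL : ∀ x : V, x ∈ L ↔ g x ∈ L)
    (hfix : ∀ v : V, g v = v → v = 0)
    (hdual : ∀ v : V, (∀ x ∈ L, ∃ n : ℤ, ⟪v, x⟫ = (n : ℝ)) → g v - v ∈ L) :
    ∀ v : V, (∀ x ∈ L, ∃ n : ℤ, ⟪v, x⟫ = (n : ℝ)) → v ≠ 0 → (4 / 3 : ℝ) ≤ ⟪v, v⟫ :=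
  dual_min_norm_of_fixed_point_free_triality_general L heven hroot g hg3 hfix hdual

end
end

section
/- Let V be a finite-dimensional real inner product space and L ⊆ V an integral lattice (⟪x, y⟫ ∈ ℤ for all x, y ∈ L). For a submodule S ⊆ L set ann_L(S) := {x ∈ L : ⟪x, s⟫ = 0 for all s ∈ S}, and call S RSSD in L if 2x ∈ S + ann_L(S) for every x ∈ L. Let N ⊆ M ⊆ L be ℤ-submodules such that M and N are both RSSD in L and M is a direct summand of L in the sense that M = L ∩ ℝ-span(M). Then ann_M(N) := {x ∈ M : ⟪x, n⟫ = 0 for all n ∈ N} is RSSD in L. -/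
open scoped InnerProductSpace

local notation "⟪" x ", " y "⟫" => @inner ℝ _ _ x y

noncomputable section

variable {V : Type*} [NormedAddCommGroup V] [InnerProductSpace ℝ V] [FiniteDimensional ℝ V]

/-- `ann_L(S)`: the elements of `L` orthogonal to all of `S`. -/
def annIn (L S : Submodule ℤ V) : Submodule ℤ V where
  carrier := {x | x ∈ L ∧ ∀ s ∈ S, ⟪x, s⟫ = (0 : ℝ)}
  zero_mem' := ⟨L.zero_mem, fun s _ => inner_zero_left s⟩
  add_mem' := by
    rintro x y ⟨hxL, hx⟩ ⟨hyL, hy⟩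
    exact ⟨L.add_mem hxL hyL, fun s hs => by rw [inner_add_left, hx s hs, hy s hs, add_zero]⟩
  smul_mem' := by
    rintro n x ⟨hxL, hx⟩
    refine ⟨L.smul_mem n hxL, fun s hs => ?_⟩
    have h : (n • x : V) = (n : ℝ) • x := by rw [Int.cast_smul_eq_zsmul]
    rw [h, real_inner_smul_left, hx s hs, mul_zero]

/-- `S` is RSSD (relatively semiselfdual) in `L`: `2L ⊆ S + ann_L(S)`. -/
def IsRSSD (L S : Submodule ℤ V) : Prop :=
  ∀ x ∈ L, (2 : ℤ) • x ∈ S ⊔ annIn L S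

end

/-! Writing `2x = m + m' = n + n'` for the two RSSD decompositions, `2x = (m - n) + (n + m')`
where `m - n = n' - m'` lies in `M` and is orthogonal to `N`, while `n ∈ N` and `m' ⊥ M` are
both orthogonal to `ann_M(N)`. -/

section

variable {V : Type*} [NormedAddCommGroup V] [InnerProductSpace ℝ V]

theorem annIn_le (L S : Submodule ℤ V) : annIn L S ≤ L :=
  fun _ hx => hx.1

theorem annIn_anti_right (L : Submodule ℤ V) {S T : Submodule ℤ V} (hST : S ≤ T) :
    annIn L T ≤ annIn L S :=
  fun _ ⟨hxL, hx⟩ => ⟨hxL, fun s hs => hx s (hST hs)⟩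

theorem mem_annIn_of_mem_annIn {L M S : Submodule ℤ V} {x : V} (hx : x ∈ annIn L S)
    (hxM : x ∈ M) : x ∈ annIn M S :=
  ⟨hxM, hx.2⟩

theorem le_annIn_annIn {L M S : Submodule ℤ V} (hSL : S ≤ L) : S ≤ annIn L (annIn M S) :=
  fun s hs => ⟨hSL hs, fun t ht => by rw [real_inner_comm]; exact ht.2 s hs⟩

variable [FiniteDimensional ℝ V]

theorem annihilator_is_RSSD_general
    (L : Submodule ℤ V)
    (M N : Submodule ℤ V) (hNM : N ≤ M) (hML : M ≤ L)
    (hMr : IsRSSD L M) (hNr : IsRSSD L N) :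
    IsRSSD L (annIn M N) := by
  intro x hx
  obtain ⟨m, hm, m', hm', hmm'⟩ := Submodule.mem_sup.mp (hMr x hx)
  obtain ⟨n, hn, n', hn', hnn'⟩ := Submodule.mem_sup.mp (hNr x hx)
  have hm'N : m' ∈ annIn L N := annIn_anti_right L hNM hm'
  have hdiff : m - n = n' - m' := by
    rw [sub_eq_sub_iff_add_eq_add, hmm'.trans hnn'.symm, add_comm]
  have hdiff_mem : m - n ∈ annIn M N :=
    mem_annIn_of_mem_annIn (hdiff ▸ sub_mem hn' hm'N) (sub_mem hm (hNM hn))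
  have hn_perp : n ∈ annIn L (annIn M N) := le_annIn_annIn (hNM.trans hML) hn
  have hm'_perp : m' ∈ annIn L (annIn M N) := annIn_anti_right L (annIn_le M N) hm'
  refine Submodule.mem_sup.mpr ⟨m - n, hdiff_mem, n + m', add_mem hn_perp hm'_perp, ?_⟩
  rw [← hmm']
  abel

theorem annihilator_is_RSSD
    (L : Submodule ℤ V)
    (hint : ∀ x ∈ L, ∀ y ∈ L, ∃ n : ℤ, ⟪x, y⟫ = (n : ℝ))
    (M N : Submodule ℤ V) (hNM : N ≤ M) (hML : M ≤ L)
    (hMr : IsRSSD L M) (hNr : IsRSSD L N)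
    (hMsummand : (M : Set V) = (L : Set V) ∩ (Submodule.span ℝ (M : Set V) : Set V)) :
    IsRSSD L (annIn M N) :=
  annihilator_is_RSSD_general L M N hNM hML hMr hNr

end
end

section
/- Let J be a symmetric 2×2 integer matrix that is positive definite (xᵀJx > 0 for every nonzero x ∈ ℝ²). (i) If det J ≤ 6, then there exists a nonzero x ∈ ℤ² with xᵀJx ∈ {1, 2}. (ii) If det J ∈ {1, 2}, then J is ℤ-congruent to a diagonal matrix. (iii) If det J ≤ 6 and both diagonal entries of J are even, then J is ℤ-congruent to !![2, 0; 0, 2] or to !![2, −1; −1, 2]. -/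
/-!
Lagrange–Gauss reduction: a positive definite binary form `!![a, b; b, c]` is ℤ-congruent to one
with `0 < a ≤ c` and `2 * |b| ≤ a`, and then `3 * a ^ 2 ≤ 4 * det`. Hence `det ≤ 6` forces
`a ∈ {1, 2}`, `det ≤ 2` forces `b = 0`, and for an even form `a = c = 2` and `|b| ≤ 1`, i.e. the
form is `A₁ ⊥ A₁` or `A₂` up to the sign of `b`. The diagonal entries of a congruent Gram matrix
are norms of lattice vectors (rows of the unimodular transformation), which gives (i).
-/

open Matrix

noncomputable section

def IntCongruent {n : Type*} [Fintype n] [DecidableEq n] (M N : Matrix n n ℤ) : Prop :=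
  ∃ P : Matrix n n ℤ, IsUnit P.det ∧ P * M * Pᵀ = N

namespace IntCongruent

variable {n : Type*} [Fintype n] [DecidableEq n] {M N L : Matrix n n ℤ}

theorem refl (M : Matrix n n ℤ) : IntCongruent M M :=
  ⟨1, by simp, by simp⟩

theorem trans (h₁ : IntCongruent M N) (h₂ : IntCongruent N L) : IntCongruent M L := by
  obtain ⟨P, hP, rfl⟩ := h₁
  obtain ⟨Q, hQ, rfl⟩ := h₂
  refine ⟨Q * P, by rw [det_mul]; exact hQ.mul hP, ?_⟩
  simp only [transpose_mul, Matrix.mul_assoc]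

theorem det_eq (h : IntCongruent M N) : N.det = M.det := by
  obtain ⟨P, hP, rfl⟩ := h
  rw [det_mul, det_mul, det_transpose]
  linear_combination M.det * Int.isUnit_mul_self hP

theorem exists_ne_zero_dotProduct_mulVec_eq (h : IntCongruent M N) (i : n) :
    ∃ x : n → ℤ, x ≠ 0 ∧ x ⬝ᵥ (M *ᵥ x) = N i i := by
  obtain ⟨P, hP, rfl⟩ := h
  refine ⟨P i, fun h0 => hP.ne_zero (det_eq_zero_of_row_eq_zero i (congrFun h0)), ?_⟩
  rw [mul_mul_apply, transpose_transpose]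

end IntCongruent

theorem even_dotProduct_mulVec {n : Type*} [Fintype n] {M : Matrix n n ℤ} (hM : M.IsSymm)
    (hdiag : ∀ i, Even (M i i)) (x : n → ℤ) : Even (x ⬝ᵥ (M *ᵥ x)) := by
  have hsum : x ⬝ᵥ (M *ᵥ x) = ∑ p : n × n, x p.1 * M p.1 p.2 * x p.2 := by
    simp only [dotProduct, mulVec, Finset.mul_sum, Fintype.sum_prod_type, mul_assoc]
  rw [← ZMod.intCast_eq_zero_iff_even, hsum, Int.cast_sum]
  -- modulo 2 the terms at `(i, j)` and `(j, i)` cancel, and the diagonal terms vanish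
  refine Finset.sum_ninvolution Prod.swap (fun ⟨i, j⟩ => ?_) (fun ⟨i, j⟩ hne hij => ?_)
    (by simp) (fun _ => rfl)
  · have h2 : (2 : ZMod 2) = 0 := rfl
    simp only [Prod.swap, hM.apply i j]
    push_cast
    linear_combination (x i * M i j * x j : ZMod 2) * h2
  · obtain rfl : i = j := (Prod.ext_iff.mp hij).2
    exact hne (by simp [ZMod.intCast_eq_zero_iff_even.mpr ((hdiag i).mul_left _ |>.mul_right _)])

theorem intCongruent_shear (a b c k : ℤ) :
    IntCongruent !![a, b; b, c] !![a, b - k * a; b - k * a, a * k ^ 2 - 2 * b * k + c] := by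
  refine ⟨!![1, 0; -k, 1], by simp [det_fin_two_of], ?_⟩
  ext i j
  fin_cases i <;> fin_cases j <;> simp [mul_apply, Fin.sum_univ_two] <;> ring

theorem intCongruent_swap (a b c : ℤ) : IntCongruent !![a, b; b, c] !![c, b; b, a] := by
  refine ⟨!![0, 1; 1, 0], by simp [det_fin_two_of], ?_⟩
  ext i j
  fin_cases i <;> fin_cases j <;> simp [mul_apply, Fin.sum_univ_two]

theorem intCongruent_neg (a b c : ℤ) : IntCongruent !![a, b; b, c] !![a, -b; -b, c] := by
  refine ⟨!![1, 0; 0, -1], by simp [det_fin_two_of], ?_⟩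
  ext i j
  fin_cases i <;> fin_cases j <;> simp [mul_apply, Fin.sum_univ_two]

theorem exists_two_mul_abs_sub_mul_le (b : ℤ) {a : ℤ} (ha : 0 < a) :
    ∃ k : ℤ, 2 * |b - k * a| ≤ a := by
  set k := round ((b : ℚ) / a)
  have ha' : (0 : ℚ) < a := by exact_mod_cast ha
  have hround : |(b : ℚ) / a - k| ≤ 1 / 2 := abs_sub_round _
  have hfactor : ((b - k * a : ℤ) : ℚ) = a * ((b : ℚ) / a - k) := by
    push_cast; field_simp
  refine ⟨k, ?_⟩
  have : 2 * |((b - k * a : ℤ) : ℚ)| ≤ a := by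
    rw [hfactor, abs_mul, abs_of_pos ha']; nlinarith
  exact_mod_cast this

def IsReducedForm (a b c : ℤ) : Prop :=
  0 < a ∧ a ≤ c ∧ 2 * |b| ≤ a

theorem exists_intCongruent_isReducedForm {a b c : ℤ} (ha : 0 < a) (hdet : 0 < a * c - b * b) :
    ∃ a' b' c' : ℤ, IntCongruent !![a, b; b, c] !![a', b'; b', c'] ∧ IsReducedForm a' b' c' := by
  induction hn : a.toNat using Nat.strong_induction_on generalizing a b c with
  | _ n ih =>
  obtain ⟨k, hk⟩ := exists_two_mul_abs_sub_mul_le b ha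
  have hshear := intCongruent_shear a b c k
  set b₁ := b - k * a
  set c₁ := a * k ^ 2 - 2 * b * k + c
  have hdet₁ : a * c₁ - b₁ * b₁ = a * c - b * b := by ring
  have hc₁ : 0 < c₁ := by nlinarith [mul_self_nonneg b₁]
  rcases le_or_gt a c₁ with hle | hlt
  · exact ⟨a, b₁, c₁, hshear, ha, hle, hk⟩
  · obtain ⟨a', b', c', hcongr, hred⟩ :=
      ih c₁.toNat (by omega) hc₁ (a := c₁) (b := b₁) (c := a) (by linarith) rfl
    exact ⟨a', b', c', hshear.trans ((intCongruent_swap _ _ _).trans hcongr), hred⟩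

theorem exists_intCongruent_isReducedForm_of_posDef {J : Matrix (Fin 2) (Fin 2) ℤ}
    (hJ : (J.map (Int.cast : ℤ → ℝ)).PosDef) :
    ∃ a b c : ℤ, IntCongruent J !![a, b; b, c] ∧ IsReducedForm a b c := by
  have hsymm : J.IsSymm :=
    map_injective Int.cast_injective (isHermitian_iff_isSymm.mp hJ.isHermitian : (J.map _)ᵀ = _)
  have hJ₂ : J = !![J 0 0, J 0 1; J 0 1, J 1 1] :=
    (eta_fin_two J).trans (by rw [hsymm.apply 0 1])
  have h00 : 0 < J 0 0 := by simpa using hJ.diag_pos (i := 0)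
  have hdet : 0 < J 0 0 * J 1 1 - J 0 1 * J 0 1 := by
    have := hJ.det_pos
    rwa [← Int.cast_det, Int.cast_pos, hJ₂, det_fin_two_of] at this
  rw [hJ₂]
  exact exists_intCongruent_isReducedForm h00 hdet

namespace IsReducedForm

variable {a b c : ℤ}

theorem three_mul_sq_le (h : IsReducedForm a b c) : 3 * a ^ 2 ≤ 4 * (a * c - b * b) := by
  obtain ⟨ha, hac, hb⟩ := h
  nlinarith [abs_mul_abs_self b, abs_nonneg b]

theorem eq_one_or_eq_two (h : IsReducedForm a b c) (hdet : a * c - b * b ≤ 6) :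
    a = 1 ∨ a = 2 := by
  have : a ≤ 2 := by nlinarith [h.three_mul_sq_le]
  have := h.1
  omega

theorem eq_zero_of_det_le_two (h : IsReducedForm a b c) (hdet : a * c - b * b ≤ 2) : b = 0 := by
  have : a ≤ 1 := by nlinarith [h.three_mul_sq_le, h.1]
  have := h.2.2
  rw [← abs_nonpos_iff]; omega

theorem eq_two_of_even (h : IsReducedForm a b c) (ha : Even a) (hc : Even c)
    (hdet : a * c - b * b ≤ 6) : a = 2 ∧ c = 2 := by
  have ha2 := h.eq_one_or_eq_two hdet
  obtain ⟨-, hac, hb⟩ := h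
  have ha' : a = 2 := by obtain ⟨r, rfl⟩ := ha; omega
  subst ha'
  have : b * b ≤ 1 := by nlinarith [abs_mul_abs_self b, abs_nonneg b]
  obtain ⟨r, rfl⟩ := hc
  have : 4 * r ≤ 7 := by linarith
  omega

end IsReducedForm

theorem intCongruent_A1_sum_A1_or_A2 {b : ℤ} (h : IsReducedForm 2 b 2) :
    IntCongruent !![2, b; b, 2] !![2, 0; 0, 2] ∨ IntCongruent !![2, b; b, 2] !![2, -1; -1, 2] := by
  have : b = -1 ∨ b = 0 ∨ b = 1 := by
    have := abs_le.mp (by linarith [h.2.2] : |b| ≤ 1); omega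
  rcases this with rfl | rfl | rfl
  · exact .inr (.refl _)
  · exact .inl (.refl _)
  · exact .inr (intCongruent_neg _ _ _)

theorem rank_two_lattice_classification
    (J : Matrix (Fin 2) (Fin 2) ℤ) (hsymm : J.IsSymm)
    (hpos : ∀ x : Fin 2 → ℝ, x ≠ 0 → 0 < x ⬝ᵥ ((J.map (Int.cast : ℤ → ℝ)) *ᵥ x)) :
    -- (i) if det J ≤ 6 there is a vector of norm 1 or 2
    (J.det ≤ 6 → ∃ x : Fin 2 → ℤ, x ≠ 0 ∧ (x ⬝ᵥ (J *ᵥ x) = 1 ∨ x ⬝ᵥ (J *ᵥ x) = 2)) ∧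
    -- (ii) if det J ∈ {1, 2} then J is ℤ-congruent to a diagonal matrix
    ((J.det = 1 ∨ J.det = 2) → ∃ P : Matrix (Fin 2) (Fin 2) ℤ,
      (P.det = 1 ∨ P.det = -1) ∧ (P * J * Pᵀ).IsDiag) ∧
    -- (iii) if J is even and det J ≤ 6 then J is A1 ⊥ A1 or A2
    ((∀ i, 2 ∣ J i i) → J.det ≤ 6 → ∃ P : Matrix (Fin 2) (Fin 2) ℤ,
      (P.det = 1 ∨ P.det = -1) ∧
      (P * J * Pᵀ = !![2, 0; 0, 2] ∨ P * J * Pᵀ = !![2, -1; -1, 2])) := by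
  have hJℝ : (J.map (Int.cast : ℤ → ℝ)).PosDef :=
    .of_dotProduct_mulVec_pos (isHermitian_iff_isSymm.mpr (hsymm.map _)) (by simpa using hpos)
  obtain ⟨a, b, c, hcongr, hred⟩ := exists_intCongruent_isReducedForm_of_posDef hJℝ
  have hdet : J.det = a * c - b * b := by rw [← hcongr.det_eq, det_fin_two_of]
  obtain ⟨x, hx, hxa : x ⬝ᵥ (J *ᵥ x) = a⟩ := hcongr.exists_ne_zero_dotProduct_mulVec_eq 0
  refine ⟨fun h6 => ⟨x, hx, hxa ▸ hred.eq_one_or_eq_two (hdet ▸ h6)⟩, fun h12 => ?_,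
    fun heven h6 => ?_⟩
  · obtain ⟨P, hP, hPJ⟩ := hcongr
    refine ⟨P, Int.isUnit_iff.mp hP, ?_⟩
    rw [hPJ, hred.eq_zero_of_det_le_two (by omega), ← diagonal_vec2]
    exact isDiag_diagonal _
  · have hval := even_dotProduct_mulVec hsymm fun i => even_iff_two_dvd.mpr (heven i)
    obtain ⟨y, -, hyc : y ⬝ᵥ (J *ᵥ y) = c⟩ := hcongr.exists_ne_zero_dotProduct_mulVec_eq 1
    obtain ⟨rfl, rfl⟩ := hred.eq_two_of_even (hxa ▸ hval x) (hyc ▸ hval y) (hdet ▸ h6)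
    rcases (intCongruent_A1_sum_A1_or_A2 hred).imp hcongr.trans hcongr.trans with
      ⟨P, hP, hPJ⟩ | ⟨P, hP, hPJ⟩
    exacts [⟨P, Int.isUnit_iff.mp hP, .inl hPJ⟩, ⟨P, Int.isUnit_iff.mp hP, .inr hPJ⟩]

end
end

section
/- There is no symmetric 4×4 integer matrix M that is positive definite (xᵀMx > 0 for every nonzero x ∈ ℝ⁴), has all diagonal entries even, and has det M = 3. In other words, there does not exist an even positive definite integral lattice of rank 4 and determinant 3. -/
/-! Modulo 4, the determinant of a symmetric 4×4 matrix with even diagonal is the square of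
the Pfaffian `m₀₁ m₂₃ - m₀₂ m₁₃ + m₀₃ m₁₂` of its off-diagonal part: in the Leibniz expansion,
every permutation with a fixed point contributes a multiple of 4 (two even diagonal factors, or
one together with a 3-cycle and its inverse), and the fixed-point-free ones sum to the Pfaffian
squared minus `4 m₀₁ m₀₃ m₁₂ m₂₃`. Since 3 is not a square modulo 4, the determinant cannot be 3. -/

open Matrix

theorem det_fin_four_eq_sq_add_four_mul {R : Type*} [CommRing R]
    {M : Matrix (Fin 4) (Fin 4) R} (hM : M.IsSymm) (d : Fin 4 → R)
    (hd : ∀ i, M i i = 2 * d i) :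
    M.det = (M 0 1 * M 2 3 - M 0 2 * M 1 3 + M 0 3 * M 1 2) ^ 2 + 4 *
      (4 * d 0 * d 1 * d 2 * d 3
        - (M 0 1 ^ 2 * d 2 * d 3 + M 0 2 ^ 2 * d 1 * d 3 + M 0 3 ^ 2 * d 1 * d 2
          + M 1 2 ^ 2 * d 0 * d 3 + M 1 3 ^ 2 * d 0 * d 2 + M 2 3 ^ 2 * d 0 * d 1)
        + d 0 * M 1 2 * M 1 3 * M 2 3 + d 1 * M 0 2 * M 0 3 * M 2 3
        + d 2 * M 0 1 * M 0 3 * M 1 3 + d 3 * M 0 1 * M 0 2 * M 1 2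
        - M 0 1 * M 0 3 * M 1 2 * M 2 3) := by
  have hs : ∀ i j, M j i = M i j := hM.apply
  rw [det_succ_row_zero]
  simp [Fin.sum_univ_succ, det_fin_three, Fin.succAbove, hd, hs 0 1, hs 0 2, hs 0 3, hs 1 2,
    hs 1 3, hs 2 3]
  ring

theorem isSquare_intCast_det_zmod_four {M : Matrix (Fin 4) (Fin 4) ℤ} (hM : M.IsSymm)
    (heven : ∀ i, 2 ∣ M i i) : IsSquare (M.det : ZMod 4) := by
  choose d hd using heven
  refine ⟨(M 0 1 * M 2 3 - M 0 2 * M 1 3 + M 0 3 * M 1 2 : ℤ), ?_⟩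
  rw [det_fin_four_eq_sq_add_four_mul hM d hd]
  push_cast
  rw [show (4 : ZMod 4) = 0 from rfl]
  ring

theorem no_even_rank_four_det_three :
    ¬∃ M : Matrix (Fin 4) (Fin 4) ℤ, M.IsSymm ∧
      (∀ x : Fin 4 → ℝ, x ≠ 0 → 0 < x ⬝ᵥ ((M.map (Int.cast : ℤ → ℝ)) *ᵥ x)) ∧
      (∀ i, 2 ∣ M i i) ∧ M.det = 3 := by
  rintro ⟨M, hsym, -, heven, hdet⟩
  have hsq := isSquare_intCast_det_zmod_four hsym heven
  rw [hdet] at hsq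
  exact absurd hsq (by decide)
end
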